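/- arXiv:1304.2107 — 3 statements merged into one kernel-verified Lean document; each statement's English description precedes it below -/
import Mathlib

section
/- In the artificial-free phase-1 ratio test, suppose basis B has entering column m and leaving row r chosen as r = argmin over i ∈ B of d_{i0}/d_{im} subject to (d_{i0} < 0 and d_{im} < 0) or (d_{i0} ≥ 0 and d_{im} > 0). Then after the pivot on (r,m), every basic variable that was feasible (d_{i0} ≥ 0) remains feasible (d'_{i0} ≥ 0). -/
/-- with the signed minimum-ratio rule of the artificial-free phase 1,
every basic row that was feasible (`d_{i0} ≥ 0`) stays feasible after the pivot. -/
theorem ratio_test_preserves_feasible_rows (k : ℕ) (d0 dm : Fin k → ℝ) (r : Fin k)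
    (hr : (d0 r < 0 ∧ dm r < 0) ∨ (0 ≤ d0 r ∧ 0 < dm r))
    (hmin : ∀ i : Fin k, (d0 i < 0 ∧ dm i < 0) ∨ (0 ≤ d0 i ∧ 0 < dm i) →
      d0 r / dm r ≤ d0 i / dm i) :
    ∀ i : Fin k, 0 ≤ d0 i →
      0 ≤ (if i = r then d0 r / dm r else d0 i - dm i * (d0 r / dm r)) := by
  intro i hi
  have ht : 0 ≤ d0 r / dm r := by
    rcases hr with ⟨h1, h2⟩ | ⟨h1, h2⟩
    · exact le_of_lt (div_pos_of_neg_of_neg h1 h2)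
    · exact div_nonneg h1 h2.le
  by_cases h : i = r
  · simp [h, ht]
  · simp only [h, if_false]
    by_cases hdm : 0 < dm i
    · nlinarith [hmin i (Or.inr ⟨hi, hdm⟩), mul_le_mul_of_nonneg_left (hmin i (Or.inr ⟨hi, hdm⟩)) hdm.le, div_mul_cancel₀ (d0 i) hdm.ne']
    · push_neg at hdm
      nlinarith [mul_nonpos_of_nonpos_of_nonneg hdm ht]
end

section
/- With the same ratio-test rule, if the leaving row r satisfies d_{r0} < 0 and d_{rm} < 0, then after the pivot the new basic variable in row r is feasible: d'_{r0} = d_{r0}/d_{rm} > 0. In particular each pivot of the artificial-free phase 1 never decreases the number of feasible basic rows. -/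
/-- if the leaving row has `d_{r0} < 0` and `d_{rm} < 0`, the new basic
variable in row `r` is feasible (`d_{r0}/d_{rm} > 0`); moreover each pivot never
decreases the number of feasible basic rows. -/
theorem infeasible_leaving_row_becomes_feasible (k : ℕ) (d0 dm : Fin k → ℝ) (r : Fin k)
    (hr : d0 r < 0 ∧ dm r < 0)
    (hmin : ∀ i : Fin k, (d0 i < 0 ∧ dm i < 0) ∨ (0 ≤ d0 i ∧ 0 < dm i) →
      d0 r / dm r ≤ d0 i / dm i) :
    let d0' : Fin k → ℝ :=
      fun i => if i = r then d0 r / dm r else d0 i - dm i * (d0 r / dm r)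
    0 < d0 r / dm r ∧
    (Finset.univ.filter fun i => 0 ≤ d0 i).card ≤
      (Finset.univ.filter fun i => 0 ≤ d0' i).card := by
  intro d0'
  have ht : 0 < d0 r / dm r := div_pos_of_neg_of_neg hr.1 hr.2
  refine ⟨ht, Finset.card_le_card ?_⟩
  intro i hi
  simp only [Finset.mem_filter, Finset.mem_univ, true_and] at hi ⊢
  have hir : i ≠ r := by rintro rfl; exact absurd hi (not_le.2 hr.1)
  simp only [d0', if_neg hir]
  rcases le_or_gt (dm i) 0 with h | h
  · nlinarith
  · have h1 := hmin i (Or.inr ⟨hi, h⟩)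
    have h2 : d0 r / dm r * dm i ≤ d0 i := by
      rw [← le_div_iff₀ h]; exact h1
    nlinarith
end

section
/- Let L = {i ∈ B : d_{i0} < 0} be the infeasible rows and define the phase-1 objective vector W(B)_j = Σ_{i∈L} d_{ij} for j ∈ N. If L ≠ ∅ and W(B)_j ≥ 0 for all j ∈ N, then the system Ax = b, x ≥ 0 is infeasible. -/
/-- if the set `L` of infeasible rows is nonempty and the phase-1
objective vector `W(B)_j = Σ_{i∈L} d_{ij}` is nonnegative on all nonbasic columns,
then `Ax = b, x ≥ 0` is infeasible. -/
theorem phase1_infeasibility_certificate (m n : ℕ) (A : Matrix (Fin m) (Fin n) ℝ)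
    (b : Fin m → ℝ) (β : Fin m → Fin n) (hβ : Function.Injective β)
    (hunit : IsUnit (A.submatrix id β))
    (L : Finset (Fin m))
    (hL : ∀ i : Fin m, i ∈ L ↔ ((A.submatrix id β)⁻¹).mulVec b i < 0)
    (hLne : L.Nonempty)
    (hW : ∀ j : Fin n, j ∉ Set.range β → 0 ≤ ∑ i ∈ L, ((A.submatrix id β)⁻¹ * A) i j) :
    ¬ ∃ x : Fin n → ℝ, 0 ≤ x ∧ A.mulVec x = b := by
  rintro ⟨x, hx, hAx⟩
  set Q := (A.submatrix id β)⁻¹ with hQ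
  have hdet : IsUnit (A.submatrix id β).det :=
    (Matrix.isUnit_iff_isUnit_det _).1 hunit
  have hinv : Q * A.submatrix id β = 1 := Matrix.nonsing_inv_mul _ hdet
  have hneg : ∑ i ∈ L, Q.mulVec b i < 0 :=
    Finset.sum_neg (fun i hi => (hL i).1 hi) hLne
  have hQb : ∀ i, Q.mulVec b i = ((Q * A).mulVec x) i := by
    intro i
    rw [← hAx, ← Matrix.mulVec_mulVec]
  have key : 0 ≤ ∑ i ∈ L, ((Q * A).mulVec x) i := by
    have hswap : ∑ i ∈ L, ((Q * A).mulVec x) i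
        = ∑ j : Fin n, (∑ i ∈ L, (Q * A) i j) * x j := by
      simp only [Matrix.mulVec, dotProduct]
      rw [Finset.sum_comm]
      simp [Finset.sum_mul]
    rw [hswap]
    apply Finset.sum_nonneg
    intro j _
    apply mul_nonneg _ (hx j)
    by_cases hj : j ∈ Set.range β
    · obtain ⟨k, rfl⟩ := hj
      have hcol : ∀ i, (Q * A) i (β k) = (1 : Matrix (Fin m) (Fin m) ℝ) i k := by
        intro i
        rw [← hinv]
        simp [Matrix.mul_apply, Matrix.submatrix_apply]
      simp only [hcol, Matrix.one_apply]
      by_cases hk : k ∈ L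
      · rw [Finset.sum_eq_single k (fun i _ hik => by simp [hik]) (fun h => absurd hk h)]
        simp
      · rw [Finset.sum_eq_zero]
        · intro i hi
          have : i ≠ k := fun h => hk (h ▸ hi)
          simp [this]
    · exact hW j hj
  simp only [hQb] at hneg
  exact absurd key (not_le.2 hneg)
end
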